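/- Let d be even and Ψ ∈ ℝ^{d+1} symmetric with reduced phase factors Φ = (φ₀,...,φ_{d̃-1}), d̃ = d/2 + 1, where Ψ = (φ_{d̃-1},...,φ₁, 2φ₀, φ₁,...,φ_{d̃-1}). Then for each 1 ≤ i ≤ d̃-1 and x ∈ [-1,1], ∂g(x,Φ)/∂φ_i = 2 Im[⟨0| U(x, Ψ + (π/2) e_{d̃-1-i}) |0⟩], where g(x,Φ) = Im[⟨0|U(x,Ψ)|0⟩]. -/

import Mathlib

open Matrix Complex

/-- `e^{iψZ}` where `Z` is the Pauli-Z matrix. -/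
noncomputable def Rz (ψ : ℝ) : Matrix (Fin 2) (Fin 2) ℂ :=
  !![Complex.exp (Complex.I * ψ), 0; 0, Complex.exp (-(Complex.I * ψ))]

/-- `W(x) = e^{i arccos(x) X}` where `X` is the Pauli-X matrix. -/
noncomputable def Wm (x : ℝ) : Matrix (Fin 2) (Fin 2) ℂ :=
  !![(x : ℂ), Complex.I * Real.sqrt (1 - x ^ 2);
     Complex.I * Real.sqrt (1 - x ^ 2), (x : ℂ)]

/-- The QSP unitary `U(x,Ψ) = e^{iψ₀Z} ∏_{j=1}^d (W(x) e^{iψ_jZ})`. -/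
noncomputable def Um (d : ℕ) (x : ℝ) (Ψ : ℕ → ℝ) : Matrix (Fin 2) (Fin 2) ℂ :=
  Rz (Ψ 0) * ((List.range d).map (fun j => Wm x * Rz (Ψ (j + 1)))).prod

/-- Full symmetric phase factors (of even degree d = 2n) built from reduced phase factors:
`Ψ = (φ_{d̃-1},…,φ₁,2φ₀,φ₁,…,φ_{d̃-1})` with `d̃ = n+1`. -/
noncomputable def PsiOf (n : ℕ) (Φ : ℕ → ℝ) : ℕ → ℝ := fun j =>
  if j = n then 2 * Φ 0 else Φ (((j : ℤ) - (n : ℤ)).natAbs)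

/-!
Differentiating `e^{iψZ}` gives `e^{i(ψ + π/2)Z}`, so the derivative of `U(x, Ψ)` in a single
phase `ψ_j` is `U(x, Ψ + (π/2) e_j)`. The reduced phase `φ_i` occupies the two positions
`d̃-1 ∓ i` of `Ψ`, so `∂g/∂φ_i` is a sum of two such terms. Both `e^{iψZ}` and `W(x)` are
symmetric matrices and `Ψ` is a palindrome, hence the second term is the transpose of the
first and has the same `⟨0|·|0⟩` entry.
-/

open scoped Real

-- Matrices carry no default norm. This one makes them a normed algebra, so that the product rule
-- applies; the statements below only involve the entrywise topology.
attribute [local instance] Matrix.linftyOpNormedRing Matrix.linftyOpNormedAlgebra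

theorem HasDerivAt.matrix_apply_im {n : Type*} [Fintype n] [DecidableEq n]
    {F : ℝ → Matrix n n ℂ} {F' : Matrix n n ℂ} {t : ℝ} (h : HasDerivAt F F' t) (i j : n) :
    HasDerivAt (fun s => (F s i j).im) (F' i j).im t :=
  (imCLM.comp (entryLinearMap ℝ ℂ i j).toContinuousLinearMap).hasFDerivAt.comp_hasDerivAt t h

lemma Rz_eq_smul_add_smul (s : ℝ) :
    Rz s = exp (I * s) • single 0 0 1 + exp (-I * s) • single 1 1 1 := by
  ext i j; fin_cases i <;> fin_cases j <;> simp [Rz]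

lemma hasDerivAt_Rz (t : ℝ) : HasDerivAt Rz (Rz (t + π / 2)) t := by
  have hexp (c : ℂ) : HasDerivAt (fun s : ℝ => exp (c * s)) (c * exp (c * t)) t := by
    simpa [mul_comm] using ((hasDerivAt_id t).ofReal_comp.const_mul c).cexp
  have hshift (c : ℂ) : exp (c * (t + π / 2 : ℝ)) = exp (c * (π / 2)) * exp (c * t) := by
    rw [← Complex.exp_add]; push_cast; ring_nf
  rw [Rz_eq_smul_add_smul (t + π / 2), funext Rz_eq_smul_add_smul, hshift, hshift,
    show I * (π / 2 : ℂ) = π / 2 * I by ring, show -I * (π / 2 : ℂ) = -π / 2 * I by ring,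
    exp_pi_div_two_mul_I, exp_neg_pi_div_two_mul_I]
  exact ((hexp I).smul_const _).fun_add ((hexp (-I)).smul_const _)

lemma Rz_transpose (ψ : ℝ) : (Rz ψ)ᵀ = Rz ψ := by
  ext i j; fin_cases i <;> fin_cases j <;> simp [Rz]

lemma Wm_transpose (x : ℝ) : (Wm x)ᵀ = Wm x := by
  ext i j; fin_cases i <;> fin_cases j <;> simp [Wm]

section Um

variable (d : ℕ) (x : ℝ)

@[simp] lemma Um_zero (Ψ : ℕ → ℝ) : Um 0 x Ψ = Rz (Ψ 0) := by
  simp [Um]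

lemma Um_succ (Ψ : ℕ → ℝ) : Um (d + 1) x Ψ = Um d x Ψ * (Wm x * Rz (Ψ (d + 1))) := by
  simp [Um, List.range_succ, mul_assoc]

lemma Um_succ' (Ψ : ℕ → ℝ) :
    Um (d + 1) x Ψ = Rz (Ψ 0) * Wm x * Um d x (fun j => Ψ (j + 1)) := by
  simp [Um, List.range_succ_eq_map, mul_assoc, Function.comp_def]

lemma Um_congr {Ψ Θ : ℕ → ℝ} (h : ∀ j ≤ d, Ψ j = Θ j) : Um d x Ψ = Um d x Θ := by
  induction d with
  | zero => simp [h 0 le_rfl]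
  | succ d ih =>
    rw [Um_succ, Um_succ, ih fun j hj => h j (by omega), h (d + 1) le_rfl]

lemma Um_update_of_lt {Ψ : ℕ → ℝ} {k : ℕ} (hk : d < k) (a : ℝ) :
    Um d x (Function.update Ψ k a) = Um d x Ψ :=
  Um_congr d x fun j hj => Function.update_of_ne (by omega) a Ψ

theorem Um_transpose (Ψ : ℕ → ℝ) : (Um d x Ψ)ᵀ = Um d x (fun j => Ψ (d - j)) := by
  induction d with
  | zero => simp [Rz_transpose]
  | succ d ih =>
    rw [Um_succ, transpose_mul, transpose_mul, ih, Rz_transpose, Wm_transpose, Um_succ']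
    simp only [Nat.sub_zero, Nat.add_sub_add_right, mul_assoc]

theorem Um_update_transpose {Ψ : ℕ → ℝ} (hΨ : ∀ j ≤ d, Ψ (d - j) = Ψ j) {k : ℕ} (hk : k ≤ d)
    (c : ℝ) : (Um d x (Function.update Ψ k (Ψ k + c)))ᵀ =
      Um d x (Function.update Ψ (d - k) (Ψ (d - k) + c)) := by
  rw [Um_transpose, hΨ k hk]
  refine Um_congr d x fun j hj => ?_
  simp only [Function.update_apply, hΨ j hj]
  congr 1
  simp only [eq_iff_iff]
  omega

theorem hasDerivAt_Um {Θ : ℝ → ℕ → ℝ} {Θ' : ℕ → ℝ} {t : ℝ}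
    (hΘ : ∀ j, HasDerivAt (fun s => Θ s j) (Θ' j) t) :
    HasDerivAt (fun s => Um d x (Θ s))
      (∑ j ∈ Finset.range (d + 1), Θ' j • Um d x (Function.update (Θ t) j (Θ t j + π / 2))) t := by
  induction d with
  | zero =>
    simp only [Um_zero, zero_add, Finset.sum_range_one, Function.update_self]
    exact (hasDerivAt_Rz (Θ t 0)).scomp t (hΘ 0)
  | succ d ih =>
    simp_rw [Um_succ]
    have hlast := ((hasDerivAt_Rz _).scomp t (hΘ (d + 1))).const_mul (Wm x)
    refine (ih.fun_mul hlast).congr_deriv ?_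
    rw [Finset.sum_range_succ _ (d + 1), Finset.sum_mul]
    congr 1
    · refine Finset.sum_congr rfl fun j hj => ?_
      rw [Finset.mem_range] at hj
      rw [Function.update_of_ne (by omega), smul_mul_assoc, Function.comp_apply]
    · rw [Function.update_self, Um_update_of_lt d x (Nat.lt_succ_self d), mul_smul_comm,
        mul_smul_comm]

end Um

lemma PsiOf_reflect (n : ℕ) (Φ : ℕ → ℝ) (j : ℕ) (hj : j ≤ 2 * n) :
    PsiOf n Φ (2 * n - j) = PsiOf n Φ j := by
  unfold PsiOf
  split_ifs <;> first | omega | (congr 1 <;> omega)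

lemma PsiOf_update_apply (n : ℕ) (Φ : ℕ → ℝ) {i : ℕ} (hi1 : 1 ≤ i) (hi2 : i ≤ n) (s : ℝ)
    (j : ℕ) :
    PsiOf n (Function.update Φ i s) j = if j = n - i ∨ j = n + i then s else PsiOf n Φ j := by
  unfold PsiOf
  simp only [Function.update_apply]
  split_ifs <;> first | rfl | omega

lemma hasDerivAt_PsiOf_update_apply (n : ℕ) (Φ : ℕ → ℝ) {i : ℕ} (hi1 : 1 ≤ i) (hi2 : i ≤ n)
    (t : ℝ) (j : ℕ) : HasDerivAt (fun s => PsiOf n (Function.update Φ i s) j)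
      (if j = n - i ∨ j = n + i then 1 else 0) t := by
  simp only [PsiOf_update_apply n Φ hi1 hi2]
  split_ifs
  exacts [hasDerivAt_id t, hasDerivAt_const t _]

lemma sum_ite_eq_or_smul {R M : Type*} [Semiring R] [AddCommMonoid M] [Module R M]
    {s : Finset ℕ} {k m : ℕ} (hk : k ∈ s) (hm : m ∈ s) (hkm : k ≠ m) (f : ℕ → M) :
    ∑ j ∈ s, (if j = k ∨ j = m then (1 : R) else 0) • f j = f k + f m := by
  rw [← Finset.sum_subset (s₁ := {k, m}), Finset.sum_pair hkm, if_pos (Or.inl rfl),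
    if_pos (Or.inr rfl), one_smul, one_smul]
  · simpa [Finset.insert_subset_iff] using ⟨hk, hm⟩
  · intro j _ hj
    simp only [Finset.mem_insert, Finset.mem_singleton] at hj
    rw [if_neg hj, zero_smul]

theorem qsp_reduced_deriv_general (n : ℕ) (x : ℝ) (Φ : ℕ → ℝ)
    (i : ℕ) (hi1 : 1 ≤ i) (hi2 : i ≤ n) :
    HasDerivAt (fun t : ℝ => ((Um (2 * n) x (PsiOf n (Function.update Φ i t))) 0 0).im)
      (2 * ((Um (2 * n) x
        (fun j => PsiOf n Φ j + if j = n - i then Real.pi / 2 else 0)) 0 0).im) (Φ i) := by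
  set Ψ := PsiOf n Φ
  set U : ℕ → Matrix (Fin 2) (Fin 2) ℂ := fun k =>
    Um (2 * n) x (Function.update Ψ k (Ψ k + π / 2))
  have hderiv := (hasDerivAt_Um (2 * n) x
    (hasDerivAt_PsiOf_update_apply n Φ hi1 hi2 (Φ i))).matrix_apply_im 0 0
  rw [Function.update_eq_self, sum_ite_eq_or_smul (by simp; omega) (by simp; omega) (by omega)]
    at hderiv
  have hsymm : U (n + i) = (U (n - i))ᵀ := by
    rw [Um_update_transpose _ _ (PsiOf_reflect n Φ) (by omega),
      show 2 * n - (n - i) = n + i by omega]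
  have htarget : (fun j => Ψ j + if j = n - i then π / 2 else 0) =
      Function.update Ψ (n - i) (Ψ (n - i) + π / 2) := by
    ext j
    by_cases hj : j = n - i <;> simp [hj]
  rw [htarget]
  refine hderiv.congr_deriv ?_
  change (U (n - i) 0 0 + U (n + i) 0 0).im = 2 * (U (n - i) 0 0).im
  rw [hsymm, transpose_apply, add_im, two_mul]

theorem qsp_reduced_deriv (n : ℕ) (x : ℝ) (hx : x ∈ Set.Icc (-1 : ℝ) 1) (Φ : ℕ → ℝ)
    (i : ℕ) (hi1 : 1 ≤ i) (hi2 : i ≤ n) :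
    HasDerivAt (fun t : ℝ => ((Um (2 * n) x (PsiOf n (Function.update Φ i t))) 0 0).im)
      (2 * ((Um (2 * n) x
        (fun j => PsiOf n Φ j + if j = n - i then Real.pi / 2 else 0)) 0 0).im) (Φ i) :=
  qsp_reduced_deriv_general n x Φ i hi1 hi2
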